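/- arXiv:1808.00879 — 4 statements merged into one kernel-verified Lean document; each statement's English description precedes it below -/
import Mathlib

section
/- Let C1, C2 be homogeneous cubics with integer coefficients, C1 in variables x3,x4,x5 and C2 in variables x0,x1,x2, such that each has no nonzero zeros mod 3 (as plane cubics). Then the cubic form 3·C1 + C2 in six variables has no nontrivial zeros modulo 9: for any (x0,...,x5) in Z^6 with not all coordinates divisible by 3, 3·C1(x3,x4,x5) + C2(x0,x1,x2) is not congruent to 0 mod 9. -/
/-!
Reducing mod 3 shows `3 ∣ C2(x0,x1,x2)`, so `x0, x1, x2` are divisible by 3 since `C2` is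
anisotropic mod 3. By homogeneity `C2(x0,x1,x2)` is then divisible by `27`, so `9 ∣ 3·C1(x3,x4,x5)`,
i.e. `3 ∣ C1(x3,x4,x5)`, and the anisotropy of `C1` makes `x3, x4, x5` divisible by 3 as well.
-/

open MvPolynomial

namespace MvPolynomial.IsHomogeneous

variable {R σ : Type*} [CommSemiring R] {φ : MvPolynomial σ R} {n : ℕ}

theorem eval_const_mul (hφ : φ.IsHomogeneous n) (c : R) (v : σ → R) :
    eval (fun i => c * v i) φ = c ^ n * eval v φ := by
  rw [eval_eq, eval_eq, Finset.mul_sum]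
  refine Finset.sum_congr rfl fun d hd => ?_
  simp only [mul_pow, Finset.prod_mul_distrib, Finset.prod_pow_eq_pow_sum,
    ← hφ.degree_eq_sum_deg_support hd]
  ring

theorem pow_dvd_eval_of_forall_dvd (hφ : φ.IsHomogeneous n) {p : R}
    {v : σ → R} (hv : ∀ i, p ∣ v i) : p ^ n ∣ eval v φ := by
  choose w hw using hv
  rw [show v = fun i => p * w i from _root_.funext hw, hφ.eval_const_mul]
  exact dvd_mul_right _ _

end MvPolynomial.IsHomogeneous

theorem dvd_of_sq_dvd_mul_add {R : Type*} [CommRing R] [IsDomain R] {p a b : R} (hp : p ≠ 0)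
    (hb : p ^ 2 ∣ b) (h : p ^ 2 ∣ p * a + b) : p ∣ a := by
  have hpa : p * p ∣ p * a := by rw [← sq]; exact (dvd_add_left hb).mp h
  exact (mul_dvd_mul_iff_left hp).mp hpa

theorem stmt_2_general (C1 C2 : MvPolynomial (Fin 3) ℤ)
    (hC2 : C2.IsHomogeneous 3)
    (h1 : ∀ v : Fin 3 → ℤ, ¬ (∀ i, (3 : ℤ) ∣ v i) → ¬ (3 : ℤ) ∣ eval v C1)
    (h2 : ∀ v : Fin 3 → ℤ, ¬ (∀ i, (3 : ℤ) ∣ v i) → ¬ (3 : ℤ) ∣ eval v C2) :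
    ∀ x : Fin 6 → ℤ, ¬ (∀ i, (3 : ℤ) ∣ x i) →
      ¬ (9 : ℤ) ∣ (3 * eval (fun i : Fin 3 => x (Fin.natAdd 3 i)) C1
          + eval (fun i : Fin 3 => x (Fin.castAdd 3 i)) C2) := by
  intro x hx h9
  set u : Fin 3 → ℤ := fun i => x (Fin.natAdd 3 i)
  set w : Fin 3 → ℤ := fun i => x (Fin.castAdd 3 i)
  have hw : ∀ i, (3 : ℤ) ∣ w i :=
    not_imp_not.mp (h2 w) <| (dvd_add_right (dvd_mul_right 3 _)).mp (dvd_trans ⟨3, rfl⟩ h9)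
  have h27 : (3 : ℤ) ^ 3 ∣ eval w C2 := hC2.pow_dvd_eval_of_forall_dvd hw
  have hu : ∀ i, (3 : ℤ) ∣ u i :=
    not_imp_not.mp (h1 u) <|
      dvd_of_sq_dvd_mul_add three_ne_zero (dvd_trans ⟨3, rfl⟩ h27) (by simpa using h9)
  exact hx fun i => Fin.addCases (m := 3) (n := 3) (motive := fun i => (3 : ℤ) ∣ x i) hw hu i

/-- If `C1`, `C2` are homogeneous integer cubics in three variables, each with no
nonzero zeros mod 3, then the senary cubic form `3·C1(x3,x4,x5) + C2(x0,x1,x2)`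
has no nontrivial zeros mod 9 (no zero with some coordinate not divisible by 3). -/
theorem stmt_2 (C1 C2 : MvPolynomial (Fin 3) ℤ)
    (hC1 : C1.IsHomogeneous 3) (hC2 : C2.IsHomogeneous 3)
    (h1 : ∀ v : Fin 3 → ℤ, ¬ (∀ i, (3 : ℤ) ∣ v i) → ¬ (3 : ℤ) ∣ eval v C1)
    (h2 : ∀ v : Fin 3 → ℤ, ¬ (∀ i, (3 : ℤ) ∣ v i) → ¬ (3 : ℤ) ∣ eval v C2) :
    ∀ x : Fin 6 → ℤ, ¬ (∀ i, (3 : ℤ) ∣ x i) →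
      ¬ (9 : ℤ) ∣ (3 * eval (fun i : Fin 3 => x (Fin.natAdd 3 i)) C1
          + eval (fun i : Fin 3 => x (Fin.castAdd 3 i)) C2) :=
  stmt_2_general C1 C2 hC2 h1 h2
end

section
/- The specific cubic form C in six variables given by C = 9[(x0+x1+x2+x5)Q1 + (x1+x3)Q2 + (x0+x1+x4+x5)Q3] + 3C1 + C2 (with Q1 = -x0x3 + x2x3 - x0x4 + x1x4 + 3x2x4 + 5x0x5 - x1x5, Q2 = -x1x3 + 5x0x4 - 2x2x4 - 2x0x5 + 5x1x5 + x2x5, Q3 = -2x2x3 - x0x4 - 2x1x4 - 2x2x4 + x1x5, and C1, C2 as above) has no nontrivial zeros modulo 9. -/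
/-!
Reducing modulo 3 kills `9Q + 3C₁`, so `C ≡ 0 (mod 9)` forces `C₂(x₀, x₁, x₂) ≡ 0 (mod 3)`, and
since `C₂` has no nontrivial zero mod 3, all of `x₀, x₁, x₂` are divisible by 3. Then `C₂` is
divisible by 27 by homogeneity, so `3 C₁(x₃, x₄, x₅) ≡ 0 (mod 9)`, and the same argument for `C₁`
makes `x₃, x₄, x₅` divisible by 3 as well.
-/

def NoNontrivialZeroMod (p : ℤ) (f : ℤ → ℤ → ℤ → ℤ) : Prop :=
  ∀ a b c, p ∣ f a b c → p ∣ a ∧ p ∣ b ∧ p ∣ c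

lemma noNontrivialZeroMod_of_zmod {p : ℕ} {f : ℤ → ℤ → ℤ → ℤ}
    {F : ZMod p → ZMod p → ZMod p → ZMod p} (hcast : ∀ a b c : ℤ, (f a b c : ZMod p) = F a b c)
    (hF : ∀ a b c, F a b c = 0 → a = 0 ∧ b = 0 ∧ c = 0) :
    NoNontrivialZeroMod p f := by
  intro a b c
  simp only [← ZMod.intCast_zmod_eq_zero_iff_dvd, hcast]
  exact hF a b c

theorem dvd_all_of_sq_dvd_mul_add {p : ℤ} (hp : p ≠ 0) {f g : ℤ → ℤ → ℤ → ℤ}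
    (hf : NoNontrivialZeroMod p f) (hg : NoNontrivialZeroMod p g)
    (hf_hom : ∀ a b c, f (p * a) (p * b) (p * c) = p ^ 3 * f a b c)
    {x0 x1 x2 x3 x4 x5 : ℤ} (h : p ^ 2 ∣ p * g x3 x4 x5 + f x0 x1 x2) :
    p ∣ x0 ∧ p ∣ x1 ∧ p ∣ x2 ∧ p ∣ x3 ∧ p ∣ x4 ∧ p ∣ x5 := by
  have hf_dvd : p ∣ f x0 x1 x2 :=
    (dvd_add_right (dvd_mul_right p _)).mp ((dvd_pow_self p two_ne_zero).trans h)
  obtain ⟨⟨a, rfl⟩, ⟨b, rfl⟩, ⟨c, rfl⟩⟩ := hf _ _ _ hf_dvd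
  have hg_dvd : p ^ 2 ∣ p * g x3 x4 x5 := by
    rw [hf_hom, pow_succ p 2, mul_assoc] at h
    exact (dvd_add_left (dvd_mul_right _ _)).mp h
  rw [sq, mul_dvd_mul_iff_left hp] at hg_dvd
  exact ⟨dvd_mul_right p a, dvd_mul_right p b, dvd_mul_right p c, hg _ _ _ hg_dvd⟩

section Forms

variable {R S : Type*} [CommRing R] [CommRing S]

def C1 (a b c : R) : R :=
  2*a^3 + 5*a^2*b + a*b^2 + 14*b^3 - 20*a^2*c - 26*a*b*c - 11*b^2*c
    + 47*a*c^2 + 30*b*c^2 + 5*c^3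

def C2 (a b c : R) : R :=
  2*a^3 - a^2*b - 2*a*b^2 - b^3 + 47*a^2*c + 10*a*b*c + b^2*c
    - 11*a*c^2 - 18*b*c^2 - 4*c^3

lemma map_C1 (φ : R →+* S) (a b c : R) : φ (C1 a b c) = C1 (φ a) (φ b) (φ c) := by
  simp only [C1, map_add, map_sub, map_mul, map_pow, map_ofNat]

lemma map_C2 (φ : R →+* S) (a b c : R) : φ (C2 a b c) = C2 (φ a) (φ b) (φ c) := by
  simp only [C2, map_add, map_sub, map_mul, map_pow, map_ofNat]

lemma C2_mul (t a b c : R) : C2 (t * a) (t * b) (t * c) = t ^ 3 * C2 a b c := by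
  unfold C2; ring

end Forms

lemma C1_eq_zero_zmod_three : ∀ a b c : ZMod 3, C1 a b c = 0 → a = 0 ∧ b = 0 ∧ c = 0 := by
  unfold C1; decide

lemma C2_eq_zero_zmod_three : ∀ a b c : ZMod 3, C2 a b c = 0 → a = 0 ∧ b = 0 ∧ c = 0 := by
  unfold C2; decide

lemma noNontrivialZeroMod_three_C1 : NoNontrivialZeroMod 3 C1 :=
  noNontrivialZeroMod_of_zmod (map_C1 (Int.castRingHom (ZMod 3))) C1_eq_zero_zmod_three

lemma noNontrivialZeroMod_three_C2 : NoNontrivialZeroMod 3 C2 :=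
  noNontrivialZeroMod_of_zmod (map_C2 (Int.castRingHom (ZMod 3))) C2_eq_zero_zmod_three

/-- The explicit cubic form `C = 9[(x0+x1+x2+x5)Q1 + (x1+x3)Q2 + (x0+x1+x4+x5)Q3]
+ 3C1 + C2` has no nontrivial zeros modulo 9: for all integers x0,…,x5 not all
divisible by 3, C(x0,…,x5) ≢ 0 (mod 9). -/
theorem stmt_5 :
    ∀ x0 x1 x2 x3 x4 x5 : ℤ,
      ¬ ((3 : ℤ) ∣ x0 ∧ (3 : ℤ) ∣ x1 ∧ (3 : ℤ) ∣ x2 ∧ (3 : ℤ) ∣ x3 ∧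
          (3 : ℤ) ∣ x4 ∧ (3 : ℤ) ∣ x5) →
      ¬ (9 : ℤ) ∣
        (9 * ((x0 + x1 + x2 + x5) *
                (-x0*x3 + x2*x3 - x0*x4 + x1*x4 + 3*x2*x4 + 5*x0*x5 - x1*x5)
            + (x1 + x3) *
                (-x1*x3 + 5*x0*x4 - 2*x2*x4 - 2*x0*x5 + 5*x1*x5 + x2*x5)
            + (x0 + x1 + x4 + x5) *
                (-2*x2*x3 - x0*x4 - 2*x1*x4 - 2*x2*x4 + x1*x5))
          + 3 * (2*x3^3 + 5*x3^2*x4 + x3*x4^2 + 14*x4^3 - 20*x3^2*x5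
              - 26*x3*x4*x5 - 11*x4^2*x5 + 47*x3*x5^2 + 30*x4*x5^2 + 5*x5^3)
          + (2*x0^3 - x0^2*x1 - 2*x0*x1^2 - x1^3 + 47*x0^2*x2 + 10*x0*x1*x2
              + x1^2*x2 - 11*x0*x2^2 - 18*x1*x2^2 - 4*x2^3)) := by
  intro x0 x1 x2 x3 x4 x5 hnot hdvd
  rw [add_assoc, dvd_add_right (dvd_mul_right _ _)] at hdvd
  exact hnot (dvd_all_of_sq_dvd_mul_add three_ne_zero noNontrivialZeroMod_three_C2
    noNontrivialZeroMod_three_C1 (C2_mul 3) hdvd)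
end

section
/- A degree 12 root-of-unity count: the polynomial F_13(t) = (1/13)(t-1)^2 (13t^20 + 8t^19 - 6t^17 - 3t^16 + 3t^15 + 3t^14 + 8t^13 - 2t^11 - 3t^10 - 2t^9 + 8t^7 + 3t^6 + 3t^5 - 3t^4 - 6t^3 + 8t + 13) has exactly 2 roots (counted with multiplicity) that are roots of unity, namely t = 1 with multiplicity 2. -/
open Polynomial
open scoped Classical Nat

/-!
If a root of unity `z` of order `m` were a root of `g`, the cyclotomic polynomial `Φ_m`, which is
the minimal polynomial of `z` over `ℤ`, would divide `g`, so `φ m ≤ deg g = 20`. This forces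
`m ≤ 66`, so `m` divides one of finitely many `N`, and for each of these `g` is coprime to
`X ^ N - 1`, which `grind` checks by a Gröbner basis computation.
Hence the roots of unity among the roots of `F` are those of `(X - 1) ^ 2`.
-/

theorem Nat.totient_prime_mul {p : ℕ} (hp : p.Prime) (d : ℕ) :
    φ (p * d) = (if p ∣ d then p else p - 1) * φ d := by
  split_ifs with h
  exacts [totient_mul_of_prime_of_dvd hp h, totient_mul_of_prime_of_not_dvd hp h]

/-- Removing a prime factor does not increase `φ`, so a counterexample above `B` would yield one
of the form `p * d` with `d ≤ B`. -/
theorem Nat.le_of_totient_le {k B : ℕ} (hB : 0 < B)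
    (hstep : ∀ d ≤ B, ∀ p ≤ k + 1, p.Prime → B < p * d → k < φ (p * d)) :
    ∀ {m : ℕ}, m ≠ 0 → φ m ≤ k → m ≤ B := by
  intro m
  induction m using Nat.strong_induction_on with
  | _ m ih =>
    intro hm hmk
    by_contra! hBm
    obtain ⟨p, hp, d, rfl⟩ := Nat.exists_prime_and_dvd (n := m) (by omega)
    have hd : d ≠ 0 := right_ne_zero_of_mul hm
    have hφ_le {e : ℕ} (he : e ∣ p * d) : φ e ≤ k :=
      (Nat.le_of_dvd (totient_pos.2 (Nat.pos_of_ne_zero hm)) (totient_dvd_of_dvd he)).trans hmk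
    have hdB : d ≤ B := ih d (lt_mul_left (Nat.pos_of_ne_zero hd) hp.one_lt) hd
      (hφ_le (dvd_mul_left d p))
    have hpk : p ≤ k + 1 := by
      have := hφ_le (dvd_mul_right p d)
      rw [totient_prime hp] at this
      omega
    exact (hstep d hdB p hpk hp hBm).not_ge hmk

/-- The `N` are the divisibility-maximal `m` with `φ m ≤ 20`. -/
theorem Nat.exists_dvd_of_totient_le_twenty {m : ℕ} (hm : m ≠ 0) (hφ : φ m ≤ 20) :
    ∃ N ∈ [26, 28, 32, 34, 36, 38, 40, 42, 44, 48, 50, 54, 60, 66], m ∣ N := by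
  have hstep : ∀ d ≤ 66, ∀ p ≤ 21, p.Prime → 66 < p * d →
      20 < (if p ∣ d then p else p - 1) * φ d := by
    decide
  have hm66 : m ≤ 66 := Nat.le_of_totient_le (by norm_num)
    (fun d hd p hp hpp hlt => (totient_prime_mul hpp d).symm ▸ hstep d hd p hp hpp hlt) hm hφ
  have hsmall : ∀ n ≤ 66, n ≠ 0 → φ n ≤ 20 →
      ∃ N ∈ [26, 28, 32, 34, 36, 38, 40, 42, 44, 48, 50, 54, 60, 66], n ∣ N := by
    decide
  exact hsmall m hm66 hm hφ

theorem IsPrimitiveRoot.totient_le_natDegree {K : Type*} [Field K] [CharZero K] {μ : K} {n : ℕ}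
    (hμ : IsPrimitiveRoot μ n) (hn : 0 < n) {P : ℤ[X]} (hP : P ≠ 0) (hPμ : aeval μ P = 0) :
    φ n ≤ P.natDegree := by
  have hdvd : cyclotomic n ℤ ∣ P := by
    rw [cyclotomic_eq_minpoly hμ hn]
    exact minpoly.isIntegrallyClosed_dvd (hμ.isIntegral hn) hPμ
  simpa only [natDegree_cyclotomic] using natDegree_le_of_dvd hdvd hP

namespace F13

noncomputable def g : ℤ[X] :=
  13*X^20 + 8*X^19 - 6*X^17 - 3*X^16 + 3*X^15 + 3*X^14 + 8*X^13
    - 2*X^11 - 3*X^10 - 2*X^9 + 8*X^7 + 3*X^6 + 3*X^5 - 3*X^4 - 6*X^3 + 8*X + 13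

theorem natDegree_g_le : g.natDegree ≤ 20 := by
  unfold g; compute_degree

theorem aeval_g (z : ℂ) : aeval z g = 13*z^20 + 8*z^19 - 6*z^17 - 3*z^16 + 3*z^15 + 3*z^14
    + 8*z^13 - 2*z^11 - 3*z^10 - 2*z^9 + 8*z^7 + 3*z^6 + 3*z^5 - 3*z^4 - 6*z^3 + 8*z + 13 := by
  simp only [g, map_add, map_sub, map_mul, map_pow, map_ofNat, aeval_X]

theorem g_ne_zero : g ≠ 0 := fun h => by simpa [h] using aeval_g 0

theorem aeval_g_ne_zero_of_pow_eq_one {z : ℂ} {N : ℕ}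
    (hN : N ∈ [26, 28, 32, 34, 36, 38, 40, 42, 44, 48, 50, 54, 60, 66]) (hz : z ^ N = 1) :
    aeval z g ≠ 0 := by
  rw [aeval_g]
  simp only [List.mem_cons, List.not_mem_nil, or_false] at hN
  rcases hN with rfl | rfl | rfl | rfl | rfl | rfl | rfl | rfl | rfl | rfl | rfl | rfl | rfl | rfl <;>
    grind

theorem aeval_g_ne_zero {z : ℂ} {n : ℕ} (hn : 0 < n) (hz : z ^ n = 1) : aeval z g ≠ 0 := by
  intro hgz
  have hpos : 0 < orderOf z := (isOfFinOrder_iff_pow_eq_one.2 ⟨n, hn, hz⟩).orderOf_pos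
  have hφ : φ (orderOf z) ≤ 20 :=
    ((IsPrimitiveRoot.orderOf z).totient_le_natDegree hpos g_ne_zero hgz).trans natDegree_g_le
  obtain ⟨N, hN, hdvd⟩ := Nat.exists_dvd_of_totient_le_twenty hpos.ne' hφ
  exact aeval_g_ne_zero_of_pow_eq_one hN (orderOf_dvd_iff_pow_eq_one.1 hdvd) hgz

end F13

/-- The polynomial `F₁₃(t) = (1/13)(t-1)²·g(t)` (with `g` the explicit degree-20
factor) has exactly 2 roots, counted with multiplicity, that are roots of unity,
namely `t = 1` with multiplicity 2. -/
theorem stmt_12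
    (g : Polynomial ℂ)
    (hg : g = 13*X^20 + 8*X^19 - 6*X^17 - 3*X^16 + 3*X^15 + 3*X^14 + 8*X^13
        - 2*X^11 - 3*X^10 - 2*X^9 + 8*X^7 + 3*X^6 + 3*X^5 - 3*X^4 - 6*X^3
        + 8*X + 13)
    (F : Polynomial ℂ) (hF : F = C (1/13) * (X - 1)^2 * g) :
    Multiset.card (F.roots.filter (fun z => ∃ n : ℕ, 0 < n ∧ z ^ n = 1)) = 2 ∧
    F.rootMultiplicity 1 = 2 := by
  have hg_root {z : ℂ} (hz : ∃ n : ℕ, 0 < n ∧ z ^ n = 1) : ¬ g.IsRoot z := by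
    obtain ⟨n, hn, hzn⟩ := hz
    simpa [F13.aeval_g, hg] using F13.aeval_g_ne_zero hn hzn
  have hg1 : ¬ g.IsRoot 1 := hg_root ⟨1, one_pos, one_pow 1⟩
  have hg0 : g ≠ 0 := fun h => hg1 (by simp [h])
  have hF' : F = C (1/13) * ((X - C 1) ^ 2 * g) := by rw [hF, C_1, mul_assoc]
  have hne : (X - C (1 : ℂ)) ^ 2 * g ≠ 0 := mul_ne_zero (pow_ne_zero 2 (X_sub_C_ne_zero 1)) hg0
  constructor
  · have hroots : F.roots = 2 • {1} + g.roots := by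
      rw [hF', roots_C_mul _ (by norm_num), roots_mul hne, roots_pow, roots_X_sub_C]
    have hfilter : g.roots.filter (fun z => ∃ n : ℕ, 0 < n ∧ z ^ n = 1) = 0 :=
      Multiset.filter_eq_nil.2 fun z hz hzu => hg_root hzu ((mem_roots hg0).1 hz)
    have hone : (2 • {1} : Multiset ℂ).filter (fun z => ∃ n : ℕ, 0 < n ∧ z ^ n = 1) = 2 • {1} :=
      Multiset.filter_eq_self.2 fun z hz => ⟨1, one_pos, by simp_all⟩
    rw [hroots, Multiset.filter_add, hfilter, hone]
    simp
  · rw [hF', rootMultiplicity_mul (mul_ne_zero (by simp) hne), rootMultiplicity_C,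
      rootMultiplicity_mul hne, rootMultiplicity_X_sub_C_pow, rootMultiplicity_eq_zero hg1]
end

section
/- The surface in weighted projective space P(1,1,1,3) over F_2 with coordinates x,y,z,w (weights 1,1,1,3) defined by w^2 + (x^2 y + x^2 z + x y^2 + y^3 + y z^2 + z^3) w + x^6 + x^5 y + x^4 y^2 + x^4 y z + x^3 y z^2 + x^3 z^3 + x y z^4 + y^6 + y^4 z^2 + y^3 z^3 + y^2 z^4 + y z^5 + z^6 = 0 is smooth: the defining polynomial and its four partial derivatives have no common nontrivial zero over an algebraic closure of F_2. -/
/-!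
In characteristic 2, `F = w² + A w + B` has `∂F/∂w = A` and `∂F/∂v = (∂A/∂v) w + ∂B/∂v` for
`v = x, y, z`, where `(A_x, A_y, A_z) = (y², x² + y² + z², x² + z²)`. An explicit combination of
`F` and its partials equals `z¹²`, so `z = 0` at a singular point. As `A_x + A_y + A_z = 0`, the
sum `F_x + F_y + F_z` does not involve `w`, and on `z = 0` it is `x⁵`. Then `A = y³`, and `F = w²`.
-/

open MvPolynomial

noncomputable def surfacePoly : MvPolynomial (Fin 4) (ZMod 2) :=
  X 3 ^ 2
    + (X 0 ^ 2 * X 1 + X 0 ^ 2 * X 2 + X 0 * X 1 ^ 2 + X 1 ^ 3 + X 1 * X 2 ^ 2 + X 2 ^ 3) * X 3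
    + X 0 ^ 6 + X 0 ^ 5 * X 1 + X 0 ^ 4 * X 1 ^ 2 + X 0 ^ 4 * X 1 * X 2
    + X 0 ^ 3 * X 1 * X 2 ^ 2 + X 0 ^ 3 * X 2 ^ 3 + X 0 * X 1 * X 2 ^ 4
    + X 1 ^ 6 + X 1 ^ 4 * X 2 ^ 2 + X 1 ^ 3 * X 2 ^ 3 + X 1 ^ 2 * X 2 ^ 4
    + X 1 * X 2 ^ 5 + X 2 ^ 6

theorem pderiv_surfacePoly (i : Fin 4) :
    pderiv i surfacePoly =
      ![X 1 ^ 2 * X 3 + X 0 ^ 4 * X 1 + X 0 ^ 2 * X 1 * X 2 ^ 2 + X 0 ^ 2 * X 2 ^ 3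
          + X 1 * X 2 ^ 4,
        (X 0 ^ 2 + X 1 ^ 2 + X 2 ^ 2) * X 3 + X 0 ^ 5 + X 0 ^ 4 * X 2 + X 0 ^ 3 * X 2 ^ 2
          + X 0 * X 2 ^ 4 + X 1 ^ 2 * X 2 ^ 3 + X 2 ^ 5,
        (X 0 ^ 2 + X 2 ^ 2) * X 3 + X 0 ^ 4 * X 1 + X 0 ^ 3 * X 2 ^ 2 + X 1 ^ 3 * X 2 ^ 2
          + X 1 * X 2 ^ 4,
        X 0 ^ 2 * X 1 + X 0 ^ 2 * X 2 + X 0 * X 1 ^ 2 + X 1 ^ 3 + X 1 * X 2 ^ 2 + X 2 ^ 3] i := by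
  -- `reduce_mod_char!` only looks for a `CharP` instance among the local hypotheses.
  have : CharP (MvPolynomial (Fin 4) (ZMod 2)) 2 := inferInstance
  fin_cases i <;> simp [surfacePoly, pderiv_X] <;> ring_nf <;> reduce_mod_char!

structure IsSingularPoint {R : Type*} [CommRing R] (x y z w : R) : Prop where
  eval : w ^ 2 + (x ^ 2 * y + x ^ 2 * z + x * y ^ 2 + y ^ 3 + y * z ^ 2 + z ^ 3) * w
    + x ^ 6 + x ^ 5 * y + x ^ 4 * y ^ 2 + x ^ 4 * y * z + x ^ 3 * y * z ^ 2 + x ^ 3 * z ^ 3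
    + x * y * z ^ 4 + y ^ 6 + y ^ 4 * z ^ 2 + y ^ 3 * z ^ 3 + y ^ 2 * z ^ 4 + y * z ^ 5
    + z ^ 6 = 0
  pderiv_x : y ^ 2 * w + x ^ 4 * y + x ^ 2 * y * z ^ 2 + x ^ 2 * z ^ 3 + y * z ^ 4 = 0
  pderiv_y : (x ^ 2 + y ^ 2 + z ^ 2) * w + x ^ 5 + x ^ 4 * z + x ^ 3 * z ^ 2 + x * z ^ 4
    + y ^ 2 * z ^ 3 + z ^ 5 = 0
  pderiv_z : (x ^ 2 + z ^ 2) * w + x ^ 4 * y + x ^ 3 * z ^ 2 + y ^ 3 * z ^ 2 + y * z ^ 4 = 0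
  pderiv_w : x ^ 2 * y + x ^ 2 * z + x * y ^ 2 + y ^ 3 + y * z ^ 2 + z ^ 3 = 0

theorem isSingularPoint_of_aeval {R : Type*} [CommRing R] [Algebra (ZMod 2) R] {p : Fin 4 → R}
    (h : aeval p surfacePoly = 0) (hD : ∀ i, aeval p (pderiv i surfacePoly) = 0) :
    IsSingularPoint (p 0) (p 1) (p 2) (p 3) := by
  have hD0 := hD 0
  have hD1 := hD 1
  have hD2 := hD 2
  have hD3 := hD 3
  simp only [pderiv_surfacePoly] at hD0 hD1 hD2 hD3
  simp only [surfacePoly, Matrix.cons_val, map_add, map_mul, map_pow, aeval_X]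
    at h hD0 hD1 hD2 hD3
  exact ⟨h, hD0, hD1, hD2, hD3⟩

namespace IsSingularPoint

variable {R : Type*} [CommRing R] [CharP R 2] {x y z w : R}

-- The cofactors were found by linear algebra over `𝔽₂` in weighted degree 12, the least possible.
set_option maxHeartbeats 1000000 in
theorem pow_twelve_eq_zero (h : IsSingularPoint x y z w) : z ^ 12 = 0 := by
  obtain ⟨hF, hFx, hFy, hFz, hFw⟩ := h
  linear_combination (norm := (ring_nf; reduce_mod_char!))
    (x ^ 5 * z + x ^ 4 * y * z + x ^ 2 * y ^ 3 * z + x ^ 2 * y ^ 2 * z ^ 2 + x * y ^ 4 * z +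
      x * y ^ 2 * z ^ 3 + x * y ^ 2 * w + x * y * z ^ 4 + y ^ 5 * z + y * z ^ 5) * hF
    + (x ^ 6 * y + x ^ 3 * y * z ^ 3 + x ^ 3 * z ^ 4 + x ^ 2 * y ^ 5 + x ^ 2 * y ^ 2 * w +
      x * y ^ 5 * z + x * y ^ 4 * z ^ 2 + x * y ^ 3 * z ^ 3 + x * y ^ 3 * w + x * z ^ 6 +
      x * w ^ 2 + y ^ 4 * z ^ 3 + y ^ 3 * z ^ 4 + y * z ^ 6 + z ^ 4 * w) * hFx
    + (x ^ 6 * z + x ^ 5 * z ^ 2 + x ^ 4 * y ^ 3 + x ^ 3 * y * w + x ^ 3 * z * w +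
      x ^ 2 * y * z * w + x ^ 2 * z ^ 5 + x * y ^ 6 + x * y ^ 5 * z + x * y ^ 3 * z ^ 3 +
      x * y * z ^ 2 * w + y ^ 6 * z) * hFy
    + (x ^ 6 * y + x ^ 5 * y ^ 2 + x ^ 4 * y ^ 2 * z + x ^ 3 * z ^ 4 + x ^ 2 * y ^ 3 * z ^ 2 +
      x ^ 2 * y ^ 2 * z ^ 3 + x * y ^ 2 * z ^ 4 + x * y * z ^ 2 * w + y ^ 4 * z ^ 3 +
      y ^ 3 * z ^ 4 + y ^ 3 * z * w + y * z ^ 3 * w) * hFz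
    + (x ^ 5 * z * w + x ^ 4 * y * z * w + x ^ 3 * y ^ 2 * z * w + x ^ 2 * y ^ 4 * w +
      x * y ^ 5 * z ^ 3 + x * y ^ 3 * z ^ 2 * w + y ^ 8 * z + y ^ 5 * z ^ 4 + y ^ 4 * z ^ 5 +
      y ^ 2 * z * w ^ 2 + z ^ 9) * hFw

theorem eq_zero [IsReduced R] (h : IsSingularPoint x y z w) :
    x = 0 ∧ y = 0 ∧ z = 0 ∧ w = 0 := by
  obtain rfl : z = 0 := IsNilpotent.eq_zero ⟨12, h.pow_twelve_eq_zero⟩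
  obtain ⟨hF, hFx, hFy, hFz, hFw⟩ := h
  obtain rfl : x = 0 := IsNilpotent.eq_zero ⟨5, by
    linear_combination (norm := (ring_nf; reduce_mod_char!)) hFx + hFy + hFz⟩
  obtain rfl : y = 0 := IsNilpotent.eq_zero ⟨3, by linear_combination hFw⟩
  exact ⟨rfl, rfl, rfl, IsNilpotent.eq_zero ⟨2, by linear_combination hF⟩⟩

end IsSingularPoint

/-- The surface in weighted projective space `P(1,1,1,3)` over `𝔽₂` defined by
`w² + (x²y + x²z + xy² + y³ + yz² + z³)w + (sextic) = 0` is smooth: the defining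
polynomial and its four partial derivatives have no common nontrivial zero over
an algebraic closure of `𝔽₂`.  Variables: `X 0 = x`, `X 1 = y`, `X 2 = z`,
`X 3 = w`. -/
theorem stmt_14
    (F : MvPolynomial (Fin 4) (ZMod 2))
    (hF : F = X 3 ^ 2
        + (X 0 ^ 2 * X 1 + X 0 ^ 2 * X 2 + X 0 * X 1 ^ 2 + X 1 ^ 3
            + X 1 * X 2 ^ 2 + X 2 ^ 3) * X 3
        + X 0 ^ 6 + X 0 ^ 5 * X 1 + X 0 ^ 4 * X 1 ^ 2 + X 0 ^ 4 * X 1 * X 2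
        + X 0 ^ 3 * X 1 * X 2 ^ 2 + X 0 ^ 3 * X 2 ^ 3 + X 0 * X 1 * X 2 ^ 4
        + X 1 ^ 6 + X 1 ^ 4 * X 2 ^ 2 + X 1 ^ 3 * X 2 ^ 3 + X 1 ^ 2 * X 2 ^ 4
        + X 1 * X 2 ^ 5 + X 2 ^ 6) :
    ∀ p : Fin 4 → AlgebraicClosure (ZMod 2), p ≠ 0 →
      ¬ (aeval p F = 0 ∧ ∀ i : Fin 4, aeval p (pderiv i F) = 0) := by
  rintro p hp ⟨h, hD⟩
  obtain rfl : F = surfacePoly := hF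
  obtain ⟨h0, h1, h2, h3⟩ := (isSingularPoint_of_aeval h hD).eq_zero
  exact hp (funext fun i => by fin_cases i <;> assumption)
end
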